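/- arXiv:2201.01009 — 2 statements merged into one kernel-verified Lean document; each statement's English description precedes it below -/
import Mathlib

section
/- Let T_{n,k} be the dendrimer with k ≥ 3, and let n²_ℓ denote the number of paths of length ℓ in T_{n,k} both of whose endpoints are leaves. Then for even ℓ with 2 ≤ ℓ ≤ 2n-2, n²_ℓ = k(k-1)^{n + ℓ/2 - 3}·C(k-1,2), and for ℓ = 2n, n²_{2n} = (k-1)^{2n-2}·C(k,2). -/
open scoped Classical in
/-- A dendrimer `T_{n,k}`: a tree of radius `n` rooted at `r` in which every vertex at
distance less than `n` from the root has degree `k`, and every vertex at distance `n`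
from the root is a leaf. -/
noncomputable def IsDendrimer {V : Type*} [Fintype V] (G : SimpleGraph V) (r : V) (n k : ℕ) : Prop :=
  G.Connected ∧ G.IsAcyclic ∧ (∀ v, G.dist r v ≤ n) ∧ (∃ v, G.dist r v = n) ∧
    (∀ v, G.dist r v < n → G.degree v = k) ∧ (∀ v, G.dist r v = n → G.degree v = 1)

/-- The number of (unordered) paths of length `ℓ ≥ 1` in a tree: since a tree has a unique
path between any two vertices, this is the number of unordered pairs at distance `ℓ`. -/
noncomputable def pathCount {V : Type*} (G : SimpleGraph V) (ℓ : ℕ) : ℕ :=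
  Nat.card {e : Sym2 V // ∃ u v : V, e = s(u, v) ∧ G.dist u v = ℓ}

open scoped Classical in
/-- The number of paths of length `ℓ` with exactly one endpoint a leaf. -/
noncomputable def pathCount1 {V : Type*} [Fintype V] (G : SimpleGraph V) (ℓ : ℕ) : ℕ :=
  Nat.card {e : Sym2 V // ∃ u v : V, e = s(u, v) ∧ G.dist u v = ℓ ∧
    G.degree u = 1 ∧ G.degree v ≠ 1}

open scoped Classical in
/-- The number of paths of length `ℓ` with both endpoints leaves. -/
noncomputable def pathCount2 {V : Type*} [Fintype V] (G : SimpleGraph V) (ℓ : ℕ) : ℕ :=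
  Nat.card {e : Sym2 V // ∃ u v : V, e = s(u, v) ∧ G.dist u v = ℓ ∧
    G.degree u = 1 ∧ G.degree v = 1}

/-!
Root the tree at `r` and compare vertices through their ancestors. If `u` and `v` have the same
ancestor at depth `d` but different ancestors at depth `d + 1`, then
`dist u v = depth u + depth v - 2 d`: the upper bound goes through the common ancestor, the lower
bound comes from a function that changes by at most one along every edge. Hence the leaves at
distance `2 m` from a leaf `u` are those below its ancestor at depth `n - m` but not below its
ancestor at depth `n - m + 1`. A vertex of depth `j ≥ 1` has `(k - 1) ^ (n - j)` leaves below it and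
the root has `k (k - 1) ^ (n - 1)`; summing over the leaves `u` counts every path twice.
-/

open Finset

namespace SimpleGraph

variable {V : Type*} {G : SimpleGraph V} {r u v w x y : V} {i j d : ℕ}

theorem Connected.exists_adj_dist_add_one (hc : G.Connected) (hv : G.dist r v ≠ 0) :
    ∃ w, G.Adj w v ∧ G.dist r w + 1 = G.dist r v := by
  obtain ⟨p, hp⟩ := hc.exists_walk_length_eq_dist v r
  have hnil : ¬ p.Nil := fun h => hv (by rw [dist_comm, ← hp, h.length_eq_zero])
  refine ⟨p.snd, (p.adj_snd hnil).symm, ?_⟩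
  have h₁ : G.dist r p.snd ≤ p.tail.length := by rw [dist_comm]; exact dist_le p.tail
  have h₂ : G.dist r v ≤ G.dist r p.snd + G.dist p.snd v := hc.dist_triangle
  rw [dist_eq_one_iff_adj.2 (p.adj_snd hnil).symm] at h₂
  have := p.length_tail_add_one hnil
  rw [dist_comm] at hp
  omega

-- The root is its own parent.
open scoped Classical in
noncomputable def parent (G : SimpleGraph V) (r v : V) : V :=
  if h : ∃ w, G.Adj w v ∧ G.dist r w + 1 = G.dist r v then h.choose else r

-- For `j` beyond the depth of `v` this is `v` itself.
noncomputable def ancestor (G : SimpleGraph V) (r : V) (j : ℕ) (v : V) : V :=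
  (G.parent r)^[G.dist r v - j] v

theorem adj_parent (hc : G.Connected) (hv : G.dist r v ≠ 0) : G.Adj (G.parent r v) v := by
  have h := hc.exists_adj_dist_add_one hv
  rw [parent, dif_pos h]
  exact h.choose_spec.1

theorem dist_parent (hc : G.Connected) : G.dist r (G.parent r v) = G.dist r v - 1 := by
  by_cases hv : G.dist r v = 0
  · have h : ¬ ∃ w, G.Adj w v ∧ G.dist r w + 1 = G.dist r v := by omega
    rw [parent, dif_neg h, dist_self, hv]
  · have h := hc.exists_adj_dist_add_one hv
    rw [parent, dif_pos h]
    have := h.choose_spec.2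
    omega

theorem IsTree.eq_of_adj_of_dist_add_one (hT : G.IsTree) {w₁ w₂ : V} (h₁ : G.Adj w₁ v)
    (h₂ : G.Adj w₂ v) (hw₁ : G.dist r w₁ + 1 = G.dist r v) (hw₂ : G.dist r w₂ + 1 = G.dist r v) :
    w₁ = w₂ := by
  obtain ⟨p₁, hp₁⟩ := hT.connected.exists_walk_length_eq_dist r w₁
  obtain ⟨p₂, hp₂⟩ := hT.connected.exists_walk_length_eq_dist r w₂
  have hq₁ := (p₁.concat h₁).isPath_of_length_eq_dist (by rw [Walk.length_concat]; omega)
  have hq₂ := (p₂.concat h₂).isPath_of_length_eq_dist (by rw [Walk.length_concat]; omega)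
  have := (hT.isAcyclic.subsingleton_path r v).elim ⟨_, hq₁⟩ ⟨_, hq₂⟩
  exact (Walk.concat_inj (congrArg Subtype.val this)).1

theorem IsTree.eq_parent (hT : G.IsTree) (hadj : G.Adj w v)
    (hw : G.dist r w + 1 = G.dist r v) : w = G.parent r v :=
  hT.eq_of_adj_of_dist_add_one hadj (adj_parent hT.connected (by omega)) hw
    (by rw [dist_parent hT.connected]; omega)

theorem IsTree.adj_iff (hT : G.IsTree) :
    G.Adj x y ↔ G.dist r y ≠ 0 ∧ x = G.parent r y ∨ G.dist r x ≠ 0 ∧ y = G.parent r x := by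
  constructor
  · intro hadj
    rcases hT.dist_eq_dist_add_one_of_adj r hadj with h | h
    · exact Or.inr ⟨by omega, hT.eq_parent hadj.symm h.symm⟩
    · exact Or.inl ⟨by omega, hT.eq_parent hadj h.symm⟩
  · rintro (⟨hy, rfl⟩ | ⟨hx, rfl⟩)
    · exact adj_parent hT.connected hy
    · exact (adj_parent hT.connected hx).symm

theorem dist_iterate_parent (hc : G.Connected) (i : ℕ) :
    G.dist r ((G.parent r)^[i] v) = G.dist r v - i := by
  induction i with
  | zero => rfl
  | succ i ih => rw [Function.iterate_succ_apply', dist_parent hc, ih]; omega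

theorem dist_parent_le_one (hc : G.Connected) : G.dist v (G.parent r v) ≤ 1 := by
  by_cases hv : G.dist r v = 0
  · obtain rfl := (hc.dist_eq_zero_iff).1 hv
    rw [dist_parent hc, dist_self]
    exact zero_le_one
  · exact (dist_eq_one_iff_adj.2 (adj_parent hc hv).symm).le

theorem dist_iterate_parent_le (hc : G.Connected) (i : ℕ) :
    G.dist v ((G.parent r)^[i] v) ≤ i := by
  induction i with
  | zero => simp
  | succ i ih =>
    rw [Function.iterate_succ_apply']
    have := hc.dist_triangle (u := v) (v := (G.parent r)^[i] v)
      (w := G.parent r ((G.parent r)^[i] v))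
    have := dist_parent_le_one (r := r) (v := (G.parent r)^[i] v) hc
    omega

theorem dist_ancestor (hc : G.Connected) (hj : j ≤ G.dist r v) :
    G.dist r (G.ancestor r j v) = j := by
  rw [ancestor, dist_iterate_parent hc]
  omega

theorem dist_ancestor_le (hc : G.Connected) : G.dist v (G.ancestor r j v) ≤ G.dist r v - j :=
  dist_iterate_parent_le hc _

@[simp]
theorem ancestor_dist_self : G.ancestor r (G.dist r v) v = v := by
  simp [ancestor]

theorem ancestor_zero (hc : G.Connected) : G.ancestor r 0 v = r :=
  ((hc.dist_eq_zero_iff).1 (dist_ancestor hc (Nat.zero_le _))).symm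

theorem ancestor_parent (hc : G.Connected) (hj : j < G.dist r v) :
    G.ancestor r j (G.parent r v) = G.ancestor r j v := by
  rw [ancestor, ancestor, dist_parent hc, ← Function.iterate_succ_apply]
  congr 1
  omega

theorem ancestor_ancestor (hc : G.Connected) (hij : i ≤ j) (hj : j ≤ G.dist r v) :
    G.ancestor r i (G.ancestor r j v) = G.ancestor r i v := by
  rw [ancestor, dist_ancestor hc hj, ancestor, ancestor, ← Function.iterate_add_apply]
  congr 1
  omega

theorem dist_add_two_mul_le_of_ancestor_eq (hc : G.Connected) (hu : j ≤ G.dist r u)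
    (hv : j ≤ G.dist r v) (h : G.ancestor r j u = G.ancestor r j v) :
    G.dist u v + 2 * j ≤ G.dist r u + G.dist r v := by
  have hu' : G.dist u (G.ancestor r j v) ≤ G.dist r u - j := h ▸ dist_ancestor_le hc
  have hv' : G.dist (G.ancestor r j v) v ≤ G.dist r v - j :=
    dist_comm.trans_le (dist_ancestor_le hc)
  have := hc.dist_triangle (u := u) (v := G.ancestor r j v) (w := v)
  omega

theorem Walk.sub_le_length {f : V → ℤ} (hf : ∀ x y, G.Adj x y → f x ≤ f y + 1)
    (p : G.Walk u v) : f u - f v ≤ p.length := by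
  induction p with
  | nil => simp
  | cons h p ih =>
    have := hf _ _ h
    rw [Walk.length_cons]
    push_cast
    omega

theorem Connected.sub_le_dist (hc : G.Connected) {f : V → ℤ}
    (hf : ∀ x y, G.Adj x y → f x ≤ f y + 1) (u v : V) : f u - f v ≤ G.dist u v := by
  obtain ⟨p, hp⟩ := hc.exists_walk_length_eq_dist u v
  exact hp ▸ p.sub_le_length hf

theorem IsTree.dist_eq_of_adj_of_ancestor_ne (hT : G.IsTree) (hadj : G.Adj x y)
    (hx : j ≤ G.dist r x) (hy : j ≤ G.dist r y → G.ancestor r j y ≠ G.ancestor r j x) :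
    G.dist r x = j ∧ G.dist r y + 1 = j := by
  rcases (hT.adj_iff (r := r)).1 hadj with ⟨hy₀, rfl⟩ | ⟨hx₀, rfl⟩
  · have := dist_parent (r := r) (v := y) hT.connected
    exact absurd (ancestor_parent hT.connected (by omega)).symm (hy (by omega))
  · have := dist_parent (r := r) (v := x) hT.connected
    by_cases hjx : j < G.dist r x
    · exact absurd (ancestor_parent hT.connected hjx) (hy (by omega))
    · omega

theorem IsTree.dist_add_two_mul_ge_of_ancestor_ne (hT : G.IsTree) (hu : j ≤ G.dist r u)
    (hne : G.ancestor r j u ≠ G.ancestor r j v) :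
    G.dist r u + G.dist r v + 2 ≤ G.dist u v + 2 * j := by
  classical
  -- Depth measured from level `j - 1`, with the sign flipped outside the subtree below `c`: this
  -- is 1-Lipschitz along edges because the only edge leaving that subtree joins `c` to its parent.
  set c := G.ancestor r j u
  let below (x : V) : Prop := j ≤ G.dist r x ∧ G.ancestor r j x = c
  let f (x : V) : ℤ := if below x then G.dist r x - j + 1 else j - 1 - G.dist r x
  have hf : ∀ x y, G.Adj x y → f x ≤ f y + 1 := by
    intro x y hadj
    have hxy := hT.dist_eq_dist_add_one_of_adj r hadj
    by_cases hx : below x <;> by_cases hy : below y <;> simp only [f, hx, hy, if_true, if_false]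
    · omega
    · have := hT.dist_eq_of_adj_of_ancestor_ne hadj hx.1 fun h h' => hy ⟨h, h'.trans hx.2⟩
      omega
    · omega
    · omega
  have := hT.connected.sub_le_dist hf u v
  have hbv : ¬ below v := fun h => hne h.2.symm
  simp only [f, hbv, if_false, show below u from ⟨hu, rfl⟩, if_true] at this
  omega

theorem IsTree.dist_add_two_mul_eq_iff (hT : G.IsTree) (hu : d < G.dist r u)
    (hv : d < G.dist r v) :
    G.dist u v + 2 * d = G.dist r u + G.dist r v ↔
      G.ancestor r d u = G.ancestor r d v ∧ G.ancestor r (d + 1) u ≠ G.ancestor r (d + 1) v := by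
  constructor
  · intro h
    refine ⟨by_contra fun hne => ?_, fun heq => ?_⟩
    · have := hT.dist_add_two_mul_ge_of_ancestor_ne hu.le hne
      omega
    · have := dist_add_two_mul_le_of_ancestor_eq hT.connected hu hv heq
      omega
  · rintro ⟨heq, hne⟩
    have := dist_add_two_mul_le_of_ancestor_eq hT.connected hu.le hv.le heq
    have := hT.dist_add_two_mul_ge_of_ancestor_ne hu hne
    omega

section Finite

variable [Fintype V] {m n k : ℕ}

open scoped Classical

noncomputable def children (G : SimpleGraph V) (r x : V) : Finset V :=
  {c | G.dist r c ≠ 0 ∧ G.parent r c = x}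

noncomputable def descendantsAt (G : SimpleGraph V) (r w : V) (i : ℕ) : Finset V :=
  {v | G.dist r v = i ∧ G.ancestor r (G.dist r w) v = w}

theorem IsTree.card_children_root (hT : G.IsTree) : #(G.children r r) = G.degree r := by
  rw [← card_neighborFinset_eq_degree]
  congr 1
  ext c
  simp [children, hT.adj_iff (r := r), eq_comm]

theorem IsTree.card_children_add_one (hT : G.IsTree) (hx : G.dist r x ≠ 0) :
    #(G.children r x) + 1 = G.degree x := by
  have hpx := dist_parent (r := r) (v := x) hT.connected
  have hnotin : G.parent r x ∉ G.children r x := by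
    simp only [children, mem_filter, mem_univ, true_and, not_and]
    intro _ h
    have := dist_parent (r := r) (v := G.parent r x) hT.connected
    rw [h] at this
    omega
  rw [← card_neighborFinset_eq_degree, ← card_insert_of_notMem hnotin]
  congr 1
  ext c
  simp [children, hT.adj_iff (r := r), hx, eq_comm, or_comm]

theorem descendantsAt_self : G.descendantsAt r w (G.dist r w) = {w} := by
  ext v
  simp only [descendantsAt, mem_filter, mem_univ, true_and, mem_singleton]
  constructor
  · rintro ⟨hv, h⟩
    rwa [← hv, ancestor_dist_self] at h
  · rintro rfl
    exact ⟨rfl, ancestor_dist_self⟩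

theorem descendantsAt_root (hc : G.Connected) :
    G.descendantsAt r r i = ({v | G.dist r v = i} : Finset V) := by
  ext v
  simp [descendantsAt, ancestor_zero hc]

theorem IsTree.card_descendantsAt_succ (hT : G.IsTree) (hi : G.dist r w ≤ i) :
    #(G.descendantsAt r w (i + 1)) = ∑ x ∈ G.descendantsAt r w i, #(G.children r x) := by
  have hmaps : Set.MapsTo (G.parent r) (G.descendantsAt r w (i + 1)) (G.descendantsAt r w i) := by
    intro v hv
    simp only [descendantsAt, coe_filter, mem_univ, true_and, Set.mem_ofPred_eq] at hv ⊢
    rw [dist_parent hT.connected, ancestor_parent hT.connected (by omega)]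
    exact ⟨by omega, hv.2⟩
  rw [card_eq_sum_card_fiberwise hmaps]
  refine sum_congr rfl fun x hx => ?_
  simp only [descendantsAt, mem_filter, mem_univ, true_and] at hx
  congr 1
  ext c
  simp only [children, descendantsAt, mem_filter, mem_univ, true_and]
  constructor
  · rintro ⟨⟨hc, -⟩, rfl⟩
    exact ⟨by omega, rfl⟩
  · rintro ⟨hc, rfl⟩
    have := dist_parent (r := r) (v := c) hT.connected
    rw [← ancestor_parent hT.connected (by omega)]
    exact ⟨⟨by omega, hx.2⟩, rfl⟩

theorem mem_descendantsAt_ancestor (hc : G.Connected) (hj : j ≤ G.dist r u) :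
    v ∈ G.descendantsAt r (G.ancestor r j u) i ↔
      G.dist r v = i ∧ G.ancestor r j u = G.ancestor r j v := by
  simp [descendantsAt, dist_ancestor hc hj, eq_comm]

theorem descendantsAt_ancestor_succ_subset (hc : G.Connected) (hj : j < G.dist r u)
    (hi : j < i) :
    G.descendantsAt r (G.ancestor r (j + 1) u) i ⊆ G.descendantsAt r (G.ancestor r j u) i := by
  intro v hv
  rw [mem_descendantsAt_ancestor hc hj.le]
  rw [mem_descendantsAt_ancestor hc hj] at hv
  refine ⟨hv.1, ?_⟩
  rw [← ancestor_ancestor hc j.le_succ hj, hv.2, ancestor_ancestor hc j.le_succ (by omega)]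

theorem IsTree.filter_dist_eq_two_mul (hT : G.IsTree) (hu : G.dist r u = n) (hm : 0 < m)
    (hmn : m ≤ n) :
    ({v | G.dist r v = n ∧ G.dist u v = 2 * m} : Finset V) =
      G.descendantsAt r (G.ancestor r (n - m) u) n \
        G.descendantsAt r (G.ancestor r (n - m + 1) u) n := by
  ext v
  simp only [mem_filter, mem_univ, true_and, mem_sdiff,
    mem_descendantsAt_ancestor hT.connected (show n - m ≤ G.dist r u by omega),
    mem_descendantsAt_ancestor hT.connected (show n - m + 1 ≤ G.dist r u by omega)]
  by_cases hv : G.dist r v = n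
  · have := hT.dist_add_two_mul_eq_iff (show n - m < G.dist r u by omega)
      (show n - m < G.dist r v by omega)
    simp only [hv, true_and]
    constructor
    · intro h
      exact this.1 (by omega)
    · intro h
      have := this.2 h
      omega
  · simp [hv]

theorem IsTree.card_filter_dist_eq_two_mul (hT : G.IsTree) (hu : G.dist r u = n) (hm : 0 < m)
    (hmn : m ≤ n) :
    #({v | G.dist r v = n ∧ G.dist u v = 2 * m} : Finset V) =
      #(G.descendantsAt r (G.ancestor r (n - m) u) n) -
        #(G.descendantsAt r (G.ancestor r (n - m + 1) u) n) := by
  rw [hT.filter_dist_eq_two_mul hu hm hmn, card_sdiff_of_subset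
    (descendantsAt_ancestor_succ_subset hT.connected (by omega) (by omega))]

theorem IsTree.card_descendantsAt_succ_of_ne_zero (hT : G.IsTree)
    (hdeg : ∀ v, G.dist r v < n → G.degree v = k) (hi : G.dist r w ≤ i) (hi₀ : i ≠ 0)
    (hin : i < n) :
    #(G.descendantsAt r w (i + 1)) = #(G.descendantsAt r w i) * (k - 1) := by
  rw [hT.card_descendantsAt_succ hi, ← smul_eq_mul, ← sum_const]
  refine sum_congr rfl fun x hx => ?_
  simp only [descendantsAt, mem_filter, mem_univ, true_and] at hx
  have := hT.card_children_add_one (r := r) (x := x) (by omega)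
  rw [hdeg x (by omega)] at this
  omega

theorem IsTree.card_descendantsAt (hT : G.IsTree) (hdeg : ∀ v, G.dist r v < n → G.degree v = k)
    (hw : G.dist r w ≠ 0) (hi : G.dist r w ≤ i) (hin : i ≤ n) :
    #(G.descendantsAt r w i) = (k - 1) ^ (i - G.dist r w) := by
  induction i, hi using Nat.le_induction with
  | base => simp [descendantsAt_self]
  | succ i hi ih =>
    rw [hT.card_descendantsAt_succ_of_ne_zero hdeg hi (by omega) (by omega), ih (by omega),
      ← pow_succ]
    congr 1
    omega

theorem IsTree.card_filter_dist_eq (hT : G.IsTree) (hdeg : ∀ v, G.dist r v < n → G.degree v = k)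
    (hi : 0 < i) (hin : i ≤ n) :
    #({v | G.dist r v = i} : Finset V) = k * (k - 1) ^ (i - 1) := by
  rw [← descendantsAt_root hT.connected]
  induction i, hi using Nat.le_induction with
  | base =>
    have hr : G.descendantsAt r r 0 = {r} := by
      simpa using descendantsAt_self (G := G) (r := r) (w := r)
    rw [hT.card_descendantsAt_succ (by simp), hr, sum_singleton, hT.card_children_root,
      hdeg r (by simp; omega)]
    simp
  | succ i hi ih =>
    rw [hT.card_descendantsAt_succ_of_ne_zero hdeg (by simp) (by omega) (by omega), ih (by omega),
      mul_assoc, ← pow_succ]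
    congr 2
    omega

end Finite

end SimpleGraph

open scoped Classical in
theorem Sym2.two_mul_natCard_of_symm {V : Type*} [Fintype V] {R : V → V → Prop}
    (hsymm : Std.Symm R) (hirrefl : Std.Irrefl R) :
    2 * Nat.card {e : Sym2 V // ∃ u v, e = s(u, v) ∧ R u v} = ∑ u, #({v | R u v} : Finset V) := by
  let H : SimpleGraph V := ⟨R, hsymm, hirrefl⟩
  have hedge : {e : Sym2 V // ∃ u v, e = s(u, v) ∧ R u v} ≃ H.edgeSet := by
    refine Equiv.subtypeEquivRight fun e => ?_
    induction e using Sym2.ind with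
    | h x y =>
      constructor
      · rintro ⟨u, v, he, huv⟩
        rcases Sym2.eq_iff.1 he with ⟨rfl, rfl⟩ | ⟨rfl, rfl⟩
        exacts [huv, hsymm.symm _ _ huv]
      · exact fun h => ⟨x, y, rfl, h⟩
  rw [Nat.card_congr hedge, Nat.card_eq_fintype_card, ← SimpleGraph.edgeFinset_card,
    ← SimpleGraph.sum_degrees_eq_twice_card_edges]
  refine sum_congr rfl fun u _ => ?_
  rw [← SimpleGraph.card_neighborFinset_eq_degree, SimpleGraph.neighborFinset_eq_filter]

open scoped Classical in
theorem two_mul_pathCount2_eq_sum {V : Type*} [Fintype V] (G : SimpleGraph V) {ℓ : ℕ} (hℓ : ℓ ≠ 0) :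
    2 * pathCount2 G ℓ =
      ∑ u with G.degree u = 1, #({v | G.degree v = 1 ∧ G.dist u v = ℓ} : Finset V) := by
  rw [pathCount2, Sym2.two_mul_natCard_of_symm
    ⟨fun u v h => ⟨SimpleGraph.dist_comm.trans h.1, h.2.2, h.2.1⟩⟩ ⟨fun v h => hℓ (by simp_all)⟩]
  rw [sum_filter]
  refine sum_congr rfl fun u _ => ?_
  split_ifs with hu
  · simp [hu, and_comm]
  · simp [hu]

theorem Nat.two_mul_choose_two (m : ℕ) : 2 * m.choose 2 = m * (m - 1) := by
  rw [Nat.choose_two_right, Nat.mul_div_cancel' (Nat.even_mul_pred_self m).two_dvd]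

namespace IsDendrimer

open SimpleGraph

open scoped Classical

variable {V : Type*} [Fintype V] {G : SimpleGraph V} {r : V} {n k m : ℕ}

theorem isTree (hG : IsDendrimer G r n k) : G.IsTree :=
  ⟨hG.1, hG.2.1⟩

theorem degree_eq_one_iff (hG : IsDendrimer G r n k) (hk : k ≠ 1) {v : V} :
    G.degree v = 1 ↔ G.dist r v = n := by
  obtain ⟨-, -, hle, -, hdeg, hleaf⟩ := hG
  exact ⟨fun h => (hle v).eq_or_lt.resolve_right fun hlt => hk (hdeg v hlt ▸ h), hleaf v⟩

theorem degree_eq_of_dist_lt (hG : IsDendrimer G r n k) (v : V) (hv : G.dist r v < n) :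
    G.degree v = k :=
  hG.2.2.2.2.1 v hv

theorem card_descendantsAt_ancestor (hG : IsDendrimer G r n k) {u : V} (hu : G.dist r u = n)
    {j : ℕ} (hj : 0 < j) (hjn : j ≤ n) :
    #(G.descendantsAt r (G.ancestor r j u) n) = (k - 1) ^ (n - j) := by
  have hT := hG.isTree
  have hdepth : G.dist r (G.ancestor r j u) = j := dist_ancestor hT.connected (by omega)
  rw [hT.card_descendantsAt hG.degree_eq_of_dist_lt (by omega) (by omega) le_rfl, hdepth]

theorem two_mul_pathCount2_eq_mul (hG : IsDendrimer G r n k) (hk : k ≠ 1) (hm : 0 < m)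
    (hmn : m ≤ n) {c : ℕ} (hc : ∀ u, G.dist r u = n →
      #(G.descendantsAt r (G.ancestor r (n - m) u) n) -
        #(G.descendantsAt r (G.ancestor r (n - m + 1) u) n) = c) :
    2 * pathCount2 G (2 * m) = k * (k - 1) ^ (n - 1) * c := by
  simp only [two_mul_pathCount2_eq_sum G (show 2 * m ≠ 0 by omega), hG.degree_eq_one_iff hk]
  have hT := hG.isTree
  rw [sum_congr rfl fun u hu => (hT.card_filter_dist_eq_two_mul (mem_filter.1 hu).2 hm hmn).trans
      (hc u (mem_filter.1 hu).2),
    sum_const, smul_eq_mul, hT.card_filter_dist_eq hG.degree_eq_of_dist_lt (by omega) le_rfl]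

theorem pathCount2_two_mul (hG : IsDendrimer G r n k) (hk : 2 ≤ k) (hm : 0 < m) (hmn : m < n) :
    pathCount2 G (2 * m) = k * (k - 1) ^ (n + m - 3) * (k - 1).choose 2 := by
  apply Nat.eq_of_mul_eq_mul_left two_pos
  rw [hG.two_mul_pathCount2_eq_mul (by omega) hm hmn.le (c := (k - 1) ^ m - (k - 1) ^ (m - 1))
    fun u hu => by
      rw [hG.card_descendantsAt_ancestor hu (by omega) (by omega),
        hG.card_descendantsAt_ancestor hu (by omega) (by omega),
        show n - (n - m) = m by omega, show n - (n - m + 1) = m - 1 by omega]]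
  obtain ⟨K, rfl⟩ : ∃ K, k = K + 1 := ⟨k - 1, by omega⟩
  obtain ⟨s, rfl⟩ : ∃ s, m = s + 1 := ⟨m - 1, by omega⟩
  obtain ⟨t, rfl⟩ : ∃ t, n = s + 2 + t := ⟨n - s - 2, by omega⟩
  simp only [Nat.add_sub_cancel]
  rw [show s + 2 + t - 1 = s + 1 + t by omega, show s + 2 + t + (s + 1) - 3 = 2 * s + t by omega,
    pow_succ, ← Nat.mul_sub_one, mul_left_comm 2, Nat.two_mul_choose_two]
  ring

theorem pathCount2_two_mul_self (hG : IsDendrimer G r n k) (hk : 2 ≤ k) (hn : 0 < n) :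
    pathCount2 G (2 * n) = (k - 1) ^ (2 * n - 2) * k.choose 2 := by
  have hT := hG.isTree
  apply Nat.eq_of_mul_eq_mul_left two_pos
  rw [hG.two_mul_pathCount2_eq_mul (by omega) hn le_rfl
    (c := k * (k - 1) ^ (n - 1) - (k - 1) ^ (n - 1)) fun u hu => by
      rw [Nat.sub_self, ancestor_zero hT.connected, descendantsAt_root hT.connected,
        hT.card_filter_dist_eq hG.degree_eq_of_dist_lt hn le_rfl,
        hG.card_descendantsAt_ancestor hu (by omega) hn]]
  obtain ⟨K, rfl⟩ : ∃ K, k = K + 1 := ⟨k - 1, by omega⟩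
  obtain ⟨t, rfl⟩ : ∃ t, n = t + 1 := ⟨n - 1, by omega⟩
  simp only [Nat.add_sub_cancel]
  rw [show 2 * (t + 1) - 2 = t + t by omega, add_one_mul, Nat.add_sub_cancel, mul_left_comm 2,
    Nat.two_mul_choose_two, Nat.add_sub_cancel]
  ring

end IsDendrimer

theorem dendrimer_pathCount2 {V : Type*} [Fintype V] (G : SimpleGraph V) (r : V)
    (n k : ℕ) (hn : 1 ≤ n) (hk : 3 ≤ k) (hG : IsDendrimer G r n k) :
    (∀ ℓ : ℕ, Even ℓ → 2 ≤ ℓ → ℓ ≤ 2 * n - 2 →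
      pathCount2 G ℓ = k * (k - 1) ^ (n + ℓ / 2 - 3) * Nat.choose (k - 1) 2) ∧
    pathCount2 G (2 * n) = (k - 1) ^ (2 * n - 2) * Nat.choose k 2 := by
  refine ⟨fun ℓ hℓ hℓ₂ hℓn => ?_, hG.pathCount2_two_mul_self (by omega) hn⟩
  obtain ⟨m, rfl⟩ := hℓ
  rw [← two_mul, Nat.mul_div_cancel_left m two_pos]
  exact hG.pathCount2_two_mul (by omega) (by omega) (by omega)
end

section
/- For natural numbers n ≥ 1 and k ≥ 3, the arithmetic identity Σ_{ℓ=0}^{n-1} (2ℓ+1)·k(k-1)^ℓ·(((k-1)^n - (k-1)^ℓ)/(k-2)) + Σ_{ℓ=1}^{n} ℓ·k(k-1)^{2ℓ-1}·((k(k-1)^{n-ℓ} - 2)/(k-2)) = (1/(k-2)^3)·[(k-1)^{2n}(nk^3 - 2(n+1)k^2 + k) + 2k^2(k-1)^n - k] holds. -/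
lemma sum_Icc_one_eq_range' {M : Type*} [AddCommMonoid M] (f : ℕ → M) (n : ℕ) :
    ∑ ℓ ∈ Finset.Icc 1 n, f ℓ = ∑ i ∈ Finset.range n, f (i + 1) := by
  induction n with
  | zero => simp
  | succ m ih => rw [Finset.sum_Icc_succ_top (by omega), ih, Finset.sum_range_succ]

lemma wgeom' (x : ℚ) (n : ℕ) : (x - 1) ^ 2 * ∑ ℓ ∈ Finset.range n, (ℓ : ℚ) * x ^ ℓ
    = x - (n : ℚ) * x ^ n + ((n : ℚ) - 1) * x ^ (n + 1) := by
  induction n with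
  | zero => simp
  | succ m ih =>
    rw [Finset.sum_range_succ, mul_add, ih]
    push_cast
    ring

lemma dendrimer_aux (n : ℕ) (K x : ℚ) (hK : K = x + 1)
    (h0 : x ≠ 0) (h1 : x - 1 ≠ 0) (h2 : x ^ 2 - 1 ≠ 0) :
    (∑ ℓ ∈ Finset.range n, (2 * (ℓ : ℚ) + 1) * K * x ^ ℓ *
        ((x ^ n - x ^ ℓ) / (K - 2))) +
    (∑ ℓ ∈ Finset.Icc 1 n, (ℓ : ℚ) * K * x ^ (2 * ℓ - 1) *
        ((K * x ^ (n - ℓ) - 2) / (K - 2))) =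
    (1 / (K - 2) ^ 3) *
      (x ^ (2 * n) * ((n : ℚ) * K ^ 3 - 2 * ((n : ℚ) + 1) * K ^ 2 + K)
        + 2 * K ^ 2 * x ^ n - K) := by
  subst hK
  have hd : x + 1 - 2 ≠ 0 := by intro h; apply h1; linarith
  -- closed forms of the four basic sums
  have hG : ∑ ℓ ∈ Finset.range n, x ^ ℓ = (x ^ n - 1) / (x - 1) := by
    rw [eq_div_iff h1]; exact geom_sum_mul x n
  have hG2 : ∑ ℓ ∈ Finset.range n, (x ^ 2) ^ ℓ = ((x ^ 2) ^ n - 1) / (x ^ 2 - 1) := by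
    rw [eq_div_iff h2]; exact geom_sum_mul (x ^ 2) n
  have hW : ∑ ℓ ∈ Finset.range n, (ℓ : ℚ) * x ^ ℓ
      = (x - (n : ℚ) * x ^ n + ((n : ℚ) - 1) * x ^ (n + 1)) / (x - 1) ^ 2 := by
    rw [eq_div_iff (pow_ne_zero 2 h1), mul_comm]; exact wgeom' x n
  have hW2 : ∑ ℓ ∈ Finset.range n, (ℓ : ℚ) * (x ^ 2) ^ ℓ
      = (x ^ 2 - (n : ℚ) * (x ^ 2) ^ n + ((n : ℚ) - 1) * (x ^ 2) ^ (n + 1)) / (x ^ 2 - 1) ^ 2 := by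
    rw [eq_div_iff (pow_ne_zero 2 h2), mul_comm]; exact wgeom' (x ^ 2) n
  -- decompose the first sum
  have ht1 : ∀ ℓ ∈ Finset.range n,
      (2 * (ℓ : ℚ) + 1) * (x + 1) * x ^ ℓ * ((x ^ n - x ^ ℓ) / (x + 1 - 2))
      = ((x + 1) * x ^ n / (x + 1 - 2)) * (2 * ((ℓ : ℚ) * x ^ ℓ) + x ^ ℓ)
        - ((x + 1) / (x + 1 - 2)) * (2 * ((ℓ : ℚ) * (x ^ 2) ^ ℓ) + (x ^ 2) ^ ℓ) := by
    intro ℓ _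
    field_simp
    ring
  have hS1 : (∑ ℓ ∈ Finset.range n, (2 * (ℓ : ℚ) + 1) * (x + 1) * x ^ ℓ *
        ((x ^ n - x ^ ℓ) / (x + 1 - 2)))
      = ((x + 1) * x ^ n / (x + 1 - 2)) *
          (2 * (∑ ℓ ∈ Finset.range n, (ℓ : ℚ) * x ^ ℓ) + ∑ ℓ ∈ Finset.range n, x ^ ℓ)
        - ((x + 1) / (x + 1 - 2)) *
          (2 * (∑ ℓ ∈ Finset.range n, (ℓ : ℚ) * (x ^ 2) ^ ℓ)
            + ∑ ℓ ∈ Finset.range n, (x ^ 2) ^ ℓ) := by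
    rw [Finset.sum_congr rfl ht1]
    simp only [Finset.sum_sub_distrib, Finset.sum_add_distrib, ← Finset.mul_sum]
  -- decompose the second sum
  have ht2 : ∀ i ∈ Finset.range n,
      ((i + 1 : ℕ) : ℚ) * (x + 1) * x ^ (2 * (i + 1) - 1) *
          (((x + 1) * x ^ (n - (i + 1)) - 2) / (x + 1 - 2))
      = ((x + 1) ^ 2 * x ^ n / (x + 1 - 2)) * ((i : ℚ) * x ^ i + x ^ i)
        - (2 * (x + 1) * x / (x + 1 - 2)) * ((i : ℚ) * (x ^ 2) ^ i + (x ^ 2) ^ i) := by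
    intro i hi
    have hin : i + 1 ≤ n := Finset.mem_range.mp hi
    have he1 : 2 * (i + 1) - 1 = 2 * i + 1 := by omega
    rw [he1, pow_sub₀ x h0 hin]
    push_cast
    field_simp
    ring
  have hS2 : (∑ ℓ ∈ Finset.Icc 1 n, (ℓ : ℚ) * (x + 1) * x ^ (2 * ℓ - 1) *
        (((x + 1) * x ^ (n - ℓ) - 2) / (x + 1 - 2)))
      = ((x + 1) ^ 2 * x ^ n / (x + 1 - 2)) *
          ((∑ ℓ ∈ Finset.range n, (ℓ : ℚ) * x ^ ℓ) + ∑ ℓ ∈ Finset.range n, x ^ ℓ)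
        - (2 * (x + 1) * x / (x + 1 - 2)) *
          ((∑ ℓ ∈ Finset.range n, (ℓ : ℚ) * (x ^ 2) ^ ℓ)
            + ∑ ℓ ∈ Finset.range n, (x ^ 2) ^ ℓ) := by
    rw [sum_Icc_one_eq_range', Finset.sum_congr rfl ht2]
    simp only [Finset.sum_sub_distrib, Finset.sum_add_distrib, ← Finset.mul_sum]
  rw [hS1, hS2, hG, hG2, hW, hW2]
  field_simp
  ring

/-- The arithmetic identity equating the two closed forms of the Wiener index of `T_{n,k}`. -/
theorem dendrimer_wiener_identity (n k : ℕ) (hn : 1 ≤ n) (hk : 3 ≤ k) :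
    (∑ ℓ ∈ Finset.range n, (2 * (ℓ : ℚ) + 1) * k * ((k : ℚ) - 1) ^ ℓ *
        ((((k : ℚ) - 1) ^ n - ((k : ℚ) - 1) ^ ℓ) / ((k : ℚ) - 2))) +
    (∑ ℓ ∈ Finset.Icc 1 n, (ℓ : ℚ) * k * ((k : ℚ) - 1) ^ (2 * ℓ - 1) *
        (((k : ℚ) * ((k : ℚ) - 1) ^ (n - ℓ) - 2) / ((k : ℚ) - 2))) =
    (1 / ((k : ℚ) - 2) ^ 3) *
      (((k : ℚ) - 1) ^ (2 * n) * ((n : ℚ) * k ^ 3 - 2 * ((n : ℚ) + 1) * k ^ 2 + k)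
        + 2 * (k : ℚ) ^ 2 * ((k : ℚ) - 1) ^ n - k) := by
  have hk3 : (3 : ℚ) ≤ (k : ℚ) := by exact_mod_cast hk
  exact dendrimer_aux n (k : ℚ) ((k : ℚ) - 1) (by ring)
    (by intro h; linarith) (by intro h; linarith) (by intro h; nlinarith)
end
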